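/- Let N_r, N_d ≥ 1 be integers, Ω_sr, Ω_sd, Ω_sp > 0, and set ξ_{k,j} = k/Ω_sr + j/Ω_sd. Let δ_sr be the maximum of N_r i.i.d. exponentials with mean Ω_sr, δ_sd the maximum of N_d i.i.d. exponentials with mean Ω_sd, and λ_sp an exponential with mean Ω_sp, all mutually independent, and set 𝒳 = min{δ_sr, δ_sd}/λ_sp. Then for every Θ₁ > 0, P(𝒳 < Θ₁) = Σ_{k=1}^{N_r} Σ_{j=1}^{N_d} (−1)^{k+j} C(N_r,k) C(N_d,j) · ξ_{k,j}Ω_sp Θ₁/(1 + ξ_{k,j}Ω_sp Θ₁). -/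

import Mathlib

/-!
The survival function of the maximum of `n` i.i.d. `Exp(a)` variables is
`1 - (1 - e^{-a t})^n = ∑_{k=1}^n (-1)^{k+1} C(n,k) e^{-k a t}`. Multiplying two such expansions
(`δ_sr` and `δ_sd` are independent) and using that the coefficients
`c_{k,j} = (-1)^{k+j} C(N_r,k) C(N_d,j)` sum to `1`, the CDF of `W = min{δ_sr, δ_sd}` is
`∑_{k,j} c_{k,j} (1 - e^{-ξ_{k,j} t})`. Conditioning on the independent, a.s. positive `λ_sp`
gives `P(W / λ_sp < Θ) = E[F_W(Θ λ_sp)]`, and `E[1 - e^{-u λ}] = u / (r + u)` for `λ ~ Exp(r)`;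
with `r = 1/Ω_sp` and `u = ξ_{k,j} Θ` this is the claimed term.
-/

open MeasureTheory Set ProbabilityTheory Real

lemma one_sub_one_sub_pow {R : Type*} [CommRing R] (x : R) (n : ℕ) :
    1 - (1 - x) ^ n = ∑ k ∈ Finset.Icc 1 n, (-1) ^ (k + 1) * (n.choose k : R) * x ^ k := by
  have hrange : Finset.range (n + 1) = insert 0 (Finset.Icc 1 n) := by
    ext k; simp only [Finset.mem_range, Finset.mem_insert, Finset.mem_Icc]; omega
  rw [← neg_add_eq_sub x, add_pow, hrange, Finset.sum_insert (by simp)]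
  simp only [pow_zero, one_pow, mul_one, Nat.choose_zero_right, Nat.cast_one,
    sub_add_cancel_left, ← Finset.sum_neg_distrib]
  refine Finset.sum_congr rfl fun k _ ↦ ?_
  rw [neg_pow, pow_succ]
  ring

lemma sum_Icc_neg_one_pow_mul_choose {R : Type*} [CommRing R] {n : ℕ} (hn : n ≠ 0) :
    ∑ k ∈ Finset.Icc 1 n, (-1) ^ (k + 1) * (n.choose k : R) = 1 := by
  simpa [zero_pow hn] using (one_sub_one_sub_pow (1 : R) n).symm

namespace ProbabilityTheory

section Independence

variable {Ω : Type*} [MeasurableSpace Ω] {P : Measure Ω}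

lemma iIndepFun.indepFun_sumElim {ι κ β : Type*} [Fintype ι] [Fintype κ] [MeasurableSpace β]
    {f : ι → Ω → β} {g : κ → Ω → β} (h : iIndepFun (Sum.elim f g) P)
    (hf : ∀ i, Measurable (f i)) (hg : ∀ j, Measurable (g j)) :
    IndepFun (fun ω i ↦ f i ω) (fun ω j ↦ g j ω) P := by
  classical
  have hST := h.indepFun_finset (Finset.univ.map .inl) (Finset.univ.map .inr)
    (by simp [Finset.disjoint_left]) (Sum.forall.2 ⟨hf, hg⟩)
  exact hST.comp (φ := fun v i ↦ v ⟨.inl i, by simp⟩) (ψ := fun v j ↦ v ⟨.inr j, by simp⟩)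
    (measurable_pi_lambda _ fun _ ↦ measurable_pi_apply _)
    (measurable_pi_lambda _ fun _ ↦ measurable_pi_apply _)

variable {β : Type*} [MeasurableSpace β] [TopologicalSpace β] [OpensMeasurableSpace β]

lemma iIndepFun.measure_iSup_lt [ConditionallyCompleteLinearOrder β] [OrderClosedTopology β]
    {ι : Type*} [Fintype ι] [Nonempty ι] {X : ι → Ω → β} {μ : Measure β} (h : iIndepFun X P)
    (hX : ∀ i, Measurable (X i)) (hlaw : ∀ i, P.map (X i) = μ) (t : β) :
    P {ω | ⨆ i, X i ω < t} = μ (Iio t) ^ Fintype.card ι := by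
  have hset : {ω | ⨆ i, X i ω < t} = ⋂ i, X i ⁻¹' Iio t := by
    ext ω
    obtain ⟨j, hj⟩ := exists_eq_ciSup_of_finite (f := fun i ↦ X i ω)
    simp only [mem_ofPred_eq, mem_iInter, mem_preimage, mem_Iio, ← hj]
    exact ⟨fun hjt i ↦ (le_ciSup (finite_range _).bddAbove i).trans_lt (hj ▸ hjt), fun h ↦ h j⟩
  rw [hset, h.meas_iInter fun i ↦ ⟨Iio t, measurableSet_Iio, rfl⟩, ← Finset.card_univ,
    ← Finset.prod_const]
  exact Finset.prod_congr rfl fun i _ ↦ by rw [← hlaw i, Measure.map_apply (hX i) measurableSet_Iio]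

lemma IndepFun.measure_le_min [LinearOrder β] [OrderClosedTopology β] {S T : Ω → β}
    (h : IndepFun S T P) (t : β) :
    P {ω | t ≤ min (S ω) (T ω)} = P {ω | t ≤ S ω} * P {ω | t ≤ T ω} := by
  have hset : {ω | t ≤ min (S ω) (T ω)} = S ⁻¹' Ici t ∩ T ⁻¹' Ici t := by
    ext ω; simp
  rw [hset, h.meas_inter ⟨Ici t, measurableSet_Ici, rfl⟩ ⟨Ici t, measurableSet_Ici, rfl⟩]
  rfl

lemma IndepFun.measure_preimage_eq_lintegral {α γ : Type*} [MeasurableSpace α]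
    [MeasurableSpace γ] [IsFiniteMeasure P] {W : Ω → α} {Z : Ω → γ} (h : IndepFun W Z P)
    (hW : Measurable W) (hZ : Measurable Z) {D : Set (α × γ)} (hD : MeasurableSet D) :
    P ((fun ω ↦ (W ω, Z ω)) ⁻¹' D) = ∫⁻ z, P.map W ((fun w ↦ (w, z)) ⁻¹' D) ∂P.map Z := by
  rw [← Measure.prod_apply_symm hD, ← (indepFun_iff_map_prod_eq_prod_map_map hW.aemeasurable
    hZ.aemeasurable).1 h, Measure.map_apply (hW.prodMk hZ) hD]

lemma IndepFun.measure_div_lt_eq_setLIntegral [IsFiniteMeasure P] {W Z : Ω → ℝ}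
    (h : IndepFun W Z P) (hW : Measurable W) (hZ : Measurable Z) (hZpos : P.map Z (Iic 0) = 0)
    (Θ : ℝ) :
    P {ω | W ω / Z ω < Θ} = ∫⁻ z in Ioi 0, P {ω | W ω < Θ * z} ∂P.map Z := by
  have hD : MeasurableSet {p : ℝ × ℝ | p.1 / p.2 < Θ} :=
    measurableSet_lt (measurable_fst.div measurable_snd) measurable_const
  have hZpos' : ∀ᵐ z ∂P.map Z, z ∈ Ioi 0 := by
    rw [ae_iff]
    simp only [mem_Ioi, not_lt]
    exact hZpos
  rw [show {ω | W ω / Z ω < Θ} = (fun ω ↦ (W ω, Z ω)) ⁻¹' {p | p.1 / p.2 < Θ} from rfl,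
    h.measure_preimage_eq_lintegral hW hZ hD]
  conv_lhs => rw [← Measure.restrict_eq_self_of_ae_mem hZpos']
  refine setLIntegral_congr_fun measurableSet_Ioi fun z (hz : 0 < z) ↦ ?_
  have hslice : (fun w ↦ (w, z)) ⁻¹' {p : ℝ × ℝ | p.1 / p.2 < Θ} = Iio (Θ * z) := by
    ext w; simp [div_lt_iff₀ hz]
  rw [hslice, Measure.map_apply hW measurableSet_Iio]
  rfl

end Independence

section Exponential

variable {r : ℝ}

lemma expMeasure_eq_withDensity (r : ℝ) :
    expMeasure r = volume.withDensity (exponentialPDF r) := rfl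

lemma measureReal_expMeasure_Iio (hr : 0 < r) {t : ℝ} (ht : 0 ≤ t) :
    (expMeasure r).real (Iio t) = 1 - exp (-(r * t)) := by
  have := isProbabilityMeasure_expMeasure hr
  have hIio : Iio t =ᵐ[expMeasure r] Iic t := by
    rw [expMeasure_eq_withDensity]; exact Iio_ae_eq_Iic
  rw [measureReal_congr hIio, ← cdf_eq_real, cdf_expMeasure_eq hr, if_pos ht]

lemma expMeasure_Iic_zero (r : ℝ) : expMeasure r (Iic 0) = 0 := by
  rw [expMeasure_eq_withDensity, withDensity_apply _ measurableSet_Iic,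
    Measure.restrict_congr_set Iio_ae_eq_Iic.symm]
  exact setLIntegral_eq_zero measurableSet_Iio fun x hx ↦ exponentialPDF_of_neg hx

lemma integrableOn_exp_neg_mul_expMeasure (hr : 0 < r) {u : ℝ} (hu : 0 ≤ u) :
    IntegrableOn (fun z ↦ exp (-(u * z))) (Ioi 0) (expMeasure r) := by
  have := isProbabilityMeasure_expMeasure hr
  refine Integrable.of_bound (by fun_prop) 1 ((ae_restrict_iff' measurableSet_Ioi).2 ?_)
  refine ae_of_all _ fun z (hz : 0 < z) ↦ ?_
  rw [norm_of_nonneg (exp_nonneg _), exp_le_one_iff, neg_nonpos]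
  positivity

lemma setIntegral_exp_neg_mul_expMeasure (hr : 0 ≤ r) {u : ℝ} (hru : 0 < r + u) :
    ∫ z in Ioi 0, exp (-(u * z)) ∂expMeasure r = r / (r + u) := by
  have hpdf : ∀ᵐ z ∂(volume.restrict (Ioi (0 : ℝ))),
      (exponentialPDF r z).toReal • exp (-(u * z)) = r * exp (-(r + u) * z) := by
    refine (ae_restrict_iff' measurableSet_Ioi).2 (ae_of_all _ fun z (hz : 0 < z) ↦ ?_)
    rw [exponentialPDF_of_nonneg hz.le, ENNReal.toReal_ofReal (by positivity), smul_eq_mul,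
      mul_assoc, ← exp_add]
    ring_nf
  rw [expMeasure_eq_withDensity,
    setIntegral_withDensity_eq_setIntegral_toReal_smul (f := exponentialPDF r)
      (measurable_exponentialPDFReal r).ennreal_ofReal (ae_of_all _ fun _ ↦ ENNReal.ofReal_lt_top)
      _ measurableSet_Ioi,
    integral_congr_ae hpdf, integral_const_mul, integral_exp_mul_Ioi (by linarith) 0]
  simp only [mul_zero, exp_zero]
  field_simp

lemma integrableOn_one_sub_exp_neg_mul_expMeasure (hr : 0 < r) {u : ℝ} (hu : 0 ≤ u) :
    IntegrableOn (fun z ↦ 1 - exp (-(u * z))) (Ioi 0) (expMeasure r) :=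
  have := isProbabilityMeasure_expMeasure hr
  (integrable_const 1).sub (integrableOn_exp_neg_mul_expMeasure hr hu)

lemma setIntegral_one_sub_exp_neg_mul_expMeasure (hr : 0 < r) {u : ℝ} (hu : 0 ≤ u) :
    ∫ z in Ioi 0, (1 - exp (-(u * z))) ∂expMeasure r = u / (r + u) := by
  have := isProbabilityMeasure_expMeasure hr
  have hIoi : (expMeasure r).real (Ioi 0) = 1 := by
    rw [← compl_Iic, probReal_compl_eq_one_sub measurableSet_Iic, measureReal_def,
      expMeasure_Iic_zero, ENNReal.toReal_zero, sub_zero]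
  rw [integral_sub (integrable_const 1) (integrableOn_exp_neg_mul_expMeasure hr hu),
    setIntegral_exp_neg_mul_expMeasure hr.le (by linarith), setIntegral_const, hIoi]
  field_simp
  ring

end Exponential

section ExponentialFamilies

variable {Ω : Type*} [MeasurableSpace Ω] {P : Measure Ω} [IsProbabilityMeasure P]

lemma measureReal_le_iSup_of_expMeasure {ι : Type*} [Fintype ι] [Nonempty ι]
    {X : ι → Ω → ℝ} {r : ℝ} (hr : 0 < r) (h : iIndepFun X P) (hX : ∀ i, Measurable (X i))
    (hlaw : ∀ i, P.map (X i) = expMeasure r) {t : ℝ} (ht : 0 ≤ t) :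
    P.real {ω | t ≤ ⨆ i, X i ω} = ∑ k ∈ Finset.Icc 1 (Fintype.card ι),
      (-1) ^ (k + 1) * ((Fintype.card ι).choose k : ℝ) * exp (-(k * r * t)) := by
  have hcompl : {ω | t ≤ ⨆ i, X i ω} = {ω | ⨆ i, X i ω < t}ᶜ := by ext; simp
  rw [hcompl, probReal_compl_eq_one_sub (measurableSet_lt (Measurable.iSup hX) measurable_const),
    measureReal_def, h.measure_iSup_lt hX hlaw, ENNReal.toReal_pow, ← measureReal_def,
    measureReal_expMeasure_Iio hr ht, one_sub_one_sub_pow]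
  refine Finset.sum_congr rfl fun k _ ↦ ?_
  rw [← exp_nat_mul]
  ring_nf

lemma measureReal_min_iSup_lt_of_expMeasure {ι κ : Type*} [Fintype ι] [Nonempty ι]
    [Fintype κ] [Nonempty κ] {X : ι → Ω → ℝ} {Y : κ → Ω → ℝ} {a b : ℝ} (ha : 0 < a) (hb : 0 < b)
    (h : iIndepFun (Sum.elim X Y) P) (hX : ∀ i, Measurable (X i)) (hY : ∀ j, Measurable (Y j))
    (hXlaw : ∀ i, P.map (X i) = expMeasure a) (hYlaw : ∀ j, P.map (Y j) = expMeasure b)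
    {t : ℝ} (ht : 0 ≤ t) :
    P.real {ω | min (⨆ i, X i ω) (⨆ j, Y j ω) < t} =
      ∑ p ∈ Finset.Icc 1 (Fintype.card ι) ×ˢ Finset.Icc 1 (Fintype.card κ),
        (-1) ^ (p.1 + p.2) * ((Fintype.card ι).choose p.1 : ℝ) *
          ((Fintype.card κ).choose p.2 : ℝ) * (1 - exp (-((p.1 * a + p.2 * b) * t))) := by
  have hST : IndepFun (fun ω ↦ ⨆ i, X i ω) (fun ω ↦ ⨆ j, Y j ω) P :=
    (h.indepFun_sumElim hX hY).comp (Measurable.iSup fun i ↦ measurable_pi_apply i)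
      (Measurable.iSup fun j ↦ measurable_pi_apply j)
  have hcompl : {ω | min (⨆ i, X i ω) (⨆ j, Y j ω) < t} =
      {ω | t ≤ min (⨆ i, X i ω) (⨆ j, Y j ω)}ᶜ := by
    ext; simp only [mem_ofPred_eq, mem_compl_iff, not_le]
  have hone : ∑ p ∈ Finset.Icc 1 (Fintype.card ι) ×ˢ Finset.Icc 1 (Fintype.card κ),
      (-1) ^ (p.1 + p.2) * ((Fintype.card ι).choose p.1 : ℝ) *
        ((Fintype.card κ).choose p.2 : ℝ) = 1 := by
    calc _ = (∑ k ∈ Finset.Icc 1 (Fintype.card ι),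
              (-1) ^ (k + 1) * ((Fintype.card ι).choose k : ℝ)) *
            ∑ j ∈ Finset.Icc 1 (Fintype.card κ),
              (-1) ^ (j + 1) * ((Fintype.card κ).choose j : ℝ) := by
          rw [Finset.sum_mul_sum, Finset.sum_product]
          refine Finset.sum_congr rfl fun k _ ↦ Finset.sum_congr rfl fun j _ ↦ ?_
          ring
      _ = 1 := by
        rw [sum_Icc_neg_one_pow_mul_choose Fintype.card_ne_zero,
          sum_Icc_neg_one_pow_mul_choose Fintype.card_ne_zero, one_mul]
  rw [hcompl, probReal_compl_eq_one_sub (measurableSet_le measurable_const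
      ((Measurable.iSup hX).min (Measurable.iSup hY))), measureReal_def, hST.measure_le_min,
    ENNReal.toReal_mul, ← measureReal_def, ← measureReal_def,
    measureReal_le_iSup_of_expMeasure (X := X) ha (h.precomp (g := Sum.inl) Sum.inl_injective)
      hX hXlaw ht,
    measureReal_le_iSup_of_expMeasure (X := Y) hb (h.precomp (g := Sum.inr) Sum.inr_injective)
      hY hYlaw ht,
    Finset.sum_mul_sum, ← Finset.sum_product']
  nth_rw 1 [← hone]
  rw [← Finset.sum_sub_distrib]
  refine Finset.sum_congr rfl fun p _ ↦ ?_
  rw [show -((p.1 * a + p.2 * b) * t) = -(p.1 * a * t) + -(p.2 * b * t) by ring, exp_add]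
  ring

lemma IndepFun.measure_div_lt_of_expMeasure {W Z : Ω → ℝ} {r Θ : ℝ} (hr : 0 < r) (hΘ : 0 < Θ)
    (h : IndepFun W Z P) (hW : Measurable W) (hZ : Measurable Z)
    (hZlaw : P.map Z = expMeasure r) {ι : Type*} {s : Finset ι} {c u : ι → ℝ}
    (hu : ∀ i ∈ s, 0 ≤ u i)
    (hcdf : ∀ t, 0 ≤ t → P.real {ω | W ω < t} = ∑ i ∈ s, c i * (1 - exp (-(u i * t)))) :
    P {ω | W ω / Z ω < Θ} = ENNReal.ofReal (∑ i ∈ s, c i * (u i * Θ / (r + u i * Θ))) := by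
  have := isProbabilityMeasure_expMeasure hr
  set F : ℝ → ℝ := fun z ↦ ∑ i ∈ s, c i * (1 - exp (-(u i * Θ * z))) with hF
  have hFcdf : ∀ z ∈ Ioi (0 : ℝ), F z = P.real {ω | W ω < Θ * z} := fun z (hz : 0 < z) ↦ by
    rw [hcdf _ (by positivity)]
    simp only [hF, mul_assoc]
  have hint : ∀ i ∈ s, IntegrableOn (fun z ↦ c i * (1 - exp (-(u i * Θ * z)))) (Ioi 0)
      (expMeasure r) := fun i hi ↦
    (integrableOn_one_sub_exp_neg_mul_expMeasure hr (mul_nonneg (hu i hi) hΘ.le)).const_mul _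
  have hnonneg : 0 ≤ᵐ[(expMeasure r).restrict (Ioi 0)] F :=
    (ae_restrict_iff' measurableSet_Ioi).2 <| ae_of_all _ fun z hz ↦
      (hFcdf z hz).symm ▸ measureReal_nonneg
  rw [h.measure_div_lt_eq_setLIntegral hW hZ (hZlaw ▸ expMeasure_Iic_zero r), hZlaw,
    setLIntegral_congr_fun measurableSet_Ioi fun z hz ↦ by rw [← ofReal_measureReal, ← hFcdf z hz],
    ← ofReal_integral_eq_lintegral_ofReal (integrable_finsetSum _ hint) hnonneg,
    integral_finsetSum _ hint]
  refine congrArg ENNReal.ofReal (Finset.sum_congr rfl fun i hi ↦ ?_)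
  rw [integral_const_mul,
    setIntegral_one_sub_exp_neg_mul_expMeasure hr (mul_nonneg (hu i hi) hΘ.le)]

end ExponentialFamilies

end ProbabilityTheory

/-- Outage probability of symbol `s₁` with selection combining:
`P(𝒳 < Θ₁) = Σ_k Σ_j (−1)^{k+j} C(N_r,k)C(N_d,j) ξ_{k,j}Ω_sp Θ₁/(1+ξ_{k,j}Ω_sp Θ₁)`. -/
theorem outage_s1_selection_combining
    {Ω : Type*} [MeasurableSpace Ω] (P : Measure Ω) [IsProbabilityMeasure P]
    (Nr Nd : ℕ) (hNr : 1 ≤ Nr) (hNd : 1 ≤ Nd)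
    (Ωsr Ωsd Ωsp : ℝ) (hΩsr : 0 < Ωsr) (hΩsd : 0 < Ωsd) (hΩsp : 0 < Ωsp)
    (ξ : ℕ → ℕ → ℝ) (hξ : ∀ k j, ξ k j = (k : ℝ) / Ωsr + (j : ℝ) / Ωsd)
    (X : Fin Nr → Ω → ℝ) (Y : Fin Nd → Ω → ℝ) (Z : Ω → ℝ)
    (hX : ∀ i, Measurable (X i)) (hY : ∀ j, Measurable (Y j)) (hZ : Measurable Z)
    (hInd : iIndepFun
      (Sum.elim (Sum.elim X Y) (fun _ : Unit => Z)) P)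
    (hXlaw : ∀ i, P.map (X i) = expMeasure (1 / Ωsr))
    (hYlaw : ∀ j, P.map (Y j) = expMeasure (1 / Ωsd))
    (hZlaw : P.map Z = expMeasure (1 / Ωsp)) :
    ∀ Θ₁ : ℝ, 0 < Θ₁ →
      P {ω | min (⨆ i, X i ω) (⨆ j, Y j ω) / Z ω < Θ₁}
        = ENNReal.ofReal
            (∑ k ∈ Finset.Icc 1 Nr, ∑ j ∈ Finset.Icc 1 Nd,
              (-1 : ℝ) ^ (k + j) * (Nr.choose k : ℝ) * (Nd.choose j : ℝ) *
                (ξ k j * Ωsp * Θ₁ / (1 + ξ k j * Ωsp * Θ₁))) := by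
  intro Θ hΘ
  have : NeZero Nr := ⟨by omega⟩
  have : NeZero Nd := ⟨by omega⟩
  have hWZ : IndepFun (fun ω ↦ min (⨆ i, X i ω) (⨆ j, Y j ω)) Z P :=
    (hInd.indepFun_sumElim (Sum.forall.2 ⟨hX, hY⟩) fun _ ↦ hZ).comp
      (φ := fun v : Fin Nr ⊕ Fin Nd → ℝ ↦ min (⨆ i, v (.inl i)) (⨆ j, v (.inr j)))
      (ψ := fun v : Unit → ℝ ↦ v ()) (by fun_prop) (by fun_prop)
  have hcdf := fun t (ht : 0 ≤ t) ↦ measureReal_min_iSup_lt_of_expMeasure (X := X) (Y := Y)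
    (one_div_pos.2 hΩsr) (one_div_pos.2 hΩsd) (hInd.precomp (g := Sum.inl) Sum.inl_injective)
    hX hY hXlaw hYlaw ht
  simp only [Fintype.card_fin] at hcdf
  rw [hWZ.measure_div_lt_of_expMeasure (one_div_pos.2 hΩsp) hΘ
    ((Measurable.iSup hX).min (Measurable.iSup hY)) hZ hZlaw (fun p _ ↦ by positivity) hcdf,
    Finset.sum_product]
  refine congrArg ENNReal.ofReal (Finset.sum_congr rfl fun k _ ↦ Finset.sum_congr rfl fun j _ ↦ ?_)
  rw [hξ]
  field_simp
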